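/- For the simple random walk with up-probability p started at 0, the duration T^{|k|} (the first hitting time of {+k, -k}) is independent of the event {S hits +k before -k}, for every p ∈ (0,1) and every positive integer k. -/

import Mathlib

/-!
Flipping every step is a bijection from the paths that first leave `(-k, k)` at time `n` through
`k` onto those that leave it through `-k`, and it multiplies the weight of each such path by
`ρ = ((1 - p) / p) ^ k`, whatever `n` is. Hence `P(T = n, S_T = -k) = ρ P(T = n, S_T = k)` for
every `n`. The walk leaves `(-k, k)` almost surely, because any `2k` consecutive up-steps force an
exit, so `P(T ≥ N)` decays geometrically. Summing over `n` gives `P(S_T = k) = 1 / (1 + ρ)`, and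
the product formula follows.
-/

open scoped Classical
noncomputable section

def walkPos {n : ℕ} (x : Fin n → Bool) (m : ℕ) : ℤ :=
  ∑ i : Fin n, if (i : ℕ) < m then (if x i then (1 : ℤ) else -1) else 0

def walkWt {n : ℕ} (p : ℝ) (x : Fin n → Bool) : ℝ :=
  ∏ i : Fin n, if x i then p else 1 - p

/-- `P(T^{|k|} = n, S_{T^{|k|}} = e)`: probability that the walk first leaves
`(-k, k)` at time `n`, landing at `e`. -/
def exitAt (p : ℝ) (k n : ℕ) (e : ℤ) : ℝ :=
  ∑ x : Fin n → Bool,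
    if (walkPos x n = e ∧ ∀ m < n, |walkPos x m| < (k : ℤ)) then walkWt p x else 0

open Finset Filter Topology

theorem zpow_sum₀ {ι G₀ : Type*} [CommGroupWithZero G₀] {r : G₀} (hr : r ≠ 0) (s : Finset ι)
    (f : ι → ℤ) : r ^ (∑ i ∈ s, f i) = ∏ i ∈ s, r ^ f i := by
  induction s using Finset.cons_induction with
  | empty => simp
  | cons a t ha ih => rw [sum_cons, prod_cons, zpow_add₀ hr, ih]

section Walk

variable {n N L : ℕ}

@[simp]
lemma walkPos_zero (x : Fin n → Bool) : walkPos x 0 = 0 := by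
  simp [walkPos]

lemma walkPos_succ (x : Fin n → Bool) {m : ℕ} (hm : m < n) :
    walkPos x (m + 1) = walkPos x m + if x ⟨m, hm⟩ then 1 else -1 := by
  have h : ∀ i : Fin n, (if (i : ℕ) < m + 1 then (if x i then (1 : ℤ) else -1) else 0) =
      (if (i : ℕ) < m then (if x i then 1 else -1) else 0) +
        if i = ⟨m, hm⟩ then (if x i then 1 else -1) else 0 := by
    intro i
    simp only [Fin.ext_iff]
    split_ifs <;> omega
  simp only [walkPos, h, sum_add_distrib, sum_ite_eq', mem_univ, if_true]

lemma walkPos_of_le (x : Fin n → Bool) {m : ℕ} (hm : n ≤ m) : walkPos x m = walkPos x n := by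
  unfold walkPos
  refine sum_congr rfl fun i _ => ?_
  simp [i.isLt, i.isLt.trans_le hm]

lemma walkPos_split (x : Fin (N + L) → Bool) (m : ℕ) :
    walkPos x m = walkPos (fun i => x (Fin.castAdd L i)) m +
      walkPos (fun j => x (Fin.natAdd N j)) (m - N) := by
  unfold walkPos
  rw [Fin.sum_univ_add]
  congr 1
  refine sum_congr rfl fun j _ => ?_
  simp only [Fin.val_natAdd]
  congr 1
  exact propext (by omega)

lemma walkPos_init (x : Fin (N + L) → Bool) {m : ℕ} (hm : m ≤ N) :
    walkPos x m = walkPos (fun i => x (Fin.castAdd L i)) m := by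
  rw [walkPos_split x m, Nat.sub_eq_zero_of_le hm, walkPos_zero, add_zero]

lemma walkPos_const_true {j : ℕ} (hj : j ≤ n) : walkPos (fun _ : Fin n => true) j = j := by
  induction j with
  | zero => simp
  | succ j ih => rw [walkPos_succ _ hj, ih (by omega)]; simp

lemma walkPos_not (x : Fin n → Bool) (m : ℕ) : walkPos (fun i => !x i) m = -walkPos x m := by
  unfold walkPos
  rw [← sum_neg_distrib]
  refine sum_congr rfl fun i _ => ?_
  beta_reduce
  split_ifs <;> cases x i <;> simp_all

lemma walkWt_nonneg {p : ℝ} (hp0 : 0 ≤ p) (hp1 : p ≤ 1) (x : Fin n → Bool) : 0 ≤ walkWt p x :=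
  prod_nonneg fun _ _ => by split <;> linarith

lemma sum_walkWt (p : ℝ) : ∑ x : Fin n → Bool, walkWt p x = 1 := by
  simp only [walkWt, ← Fintype.prod_sum fun (_ : Fin n) (b : Bool) => if b then p else 1 - p]
  simp

lemma walkWt_append (p : ℝ) (y : Fin N → Bool) (z : Fin L → Bool) :
    walkWt p (Fin.append y z) = walkWt p y * walkWt p z := by
  simp [walkWt, Fin.prod_univ_add]

lemma walkWt_not {p : ℝ} (hp0 : p ≠ 0) (hp1 : 1 - p ≠ 0) (x : Fin n → Bool) :
    walkWt p (fun i => !x i) = walkWt p x * ((1 - p) / p) ^ walkPos x n := by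
  have hx : walkPos x n = ∑ i, if x i then (1 : ℤ) else -1 := by simp [walkPos]
  rw [hx, zpow_sum₀ (div_ne_zero hp1 hp0), walkWt, walkWt, ← prod_mul_distrib]
  refine prod_congr rfl fun i _ => ?_
  cases x i <;> simp <;> field_simp

end Walk

def walkProb (p : ℝ) {n : ℕ} (C : (Fin n → Bool) → Prop) : ℝ :=
  ∑ x, if C x then walkWt p x else 0

section WalkProb

variable {p : ℝ} {n N L : ℕ}

lemma walkProb_congr {C D : (Fin n → Bool) → Prop} (h : ∀ x, C x ↔ D x) :
    walkProb p C = walkProb p D := by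
  simp only [walkProb, h]

lemma walkProb_nonneg (hp0 : 0 ≤ p) (hp1 : p ≤ 1) (C : (Fin n → Bool) → Prop) :
    0 ≤ walkProb p C :=
  sum_nonneg fun x _ => by split <;> simp [walkWt_nonneg hp0 hp1 x]

lemma walkProb_mono (hp0 : 0 ≤ p) (hp1 : p ≤ 1) {C D : (Fin n → Bool) → Prop}
    (h : ∀ x, C x → D x) : walkProb p C ≤ walkProb p D :=
  sum_le_sum fun x _ => by
    by_cases hC : C x
    · simp [hC, h x hC]
    · simp only [hC, if_false]
      split <;> simp [walkWt_nonneg hp0 hp1 x]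

lemma walkProb_true : walkProb p (fun _ : Fin n → Bool => True) = 1 := by
  simp [walkProb, sum_walkWt]

lemma walkProb_not (C : (Fin n → Bool) → Prop) :
    walkProb p (fun x => ¬C x) = 1 - walkProb p C := by
  rw [← sum_walkWt (n := n) p, walkProb, walkProb, ← sum_sub_distrib]
  refine sum_congr rfl fun x _ => ?_
  split_ifs <;> simp_all

lemma walkProb_and_add_and_not (C D : (Fin n → Bool) → Prop) :
    walkProb p (fun x => C x ∧ D x) + walkProb p (fun x => C x ∧ ¬D x) = walkProb p C := by
  rw [walkProb, walkProb, walkProb, ← sum_add_distrib]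
  refine sum_congr rfl fun x _ => ?_
  split_ifs <;> simp_all

lemma walkProb_all_true : walkProb p (fun z : Fin n → Bool => ∀ j, z j = true) = p ^ n := by
  rw [walkProb_congr (D := (· = fun _ => true)) fun z => funext_iff.symm, walkProb,
    Fintype.sum_eq_single (fun _ => true) fun z hz => by simp [hz]]
  simp [walkWt]

lemma walkProb_append (C : (Fin N → Bool) → Prop) (D : (Fin L → Bool) → Prop) :
    walkProb p (fun x : Fin (N + L) → Bool =>
        C (fun i => x (Fin.castAdd L i)) ∧ D (fun j => x (Fin.natAdd N j))) =
      walkProb p C * walkProb p D := by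
  rw [walkProb, ← (Fin.appendEquiv N L).sum_comp, Fintype.sum_prod_type, walkProb, walkProb,
    sum_mul_sum]
  refine sum_congr rfl fun y _ => sum_congr rfl fun z _ => ?_
  simp only [Fin.appendEquiv, Equiv.coe_fn_mk, Fin.append_left, Fin.append_right, walkWt_append]
  split_ifs <;> simp_all

end WalkProb

def Survives (k M : ℕ) {n : ℕ} (x : Fin n → Bool) : Prop :=
  ∀ m < M, |walkPos x m| < (k : ℤ)

/-- `P(T^{|k|} ≥ N)`. -/
def survivalProb (p : ℝ) (k N : ℕ) : ℝ :=
  walkProb p (Survives k N : (Fin N → Bool) → Prop)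

section Survival

variable {p : ℝ} {k n N L : ℕ}

lemma exitAt_eq_walkProb (e : ℤ) :
    exitAt p k n e = walkProb p fun x : Fin n → Bool => walkPos x n = e ∧ Survives k n x := by
  -- not `rfl`: the `if` in `exitAt` uses the computable `Decidable` instance, not the classical one
  unfold exitAt walkProb Survives
  congr! 2

lemma survives_init_iff (x : Fin (N + L) → Bool) {M : ℕ} (hM : M ≤ N + 1) :
    Survives k M (fun i => x (Fin.castAdd L i)) ↔ Survives k M x := by
  refine forall₂_congr fun m hm => ?_
  rw [walkPos_init x (by omega)]

lemma survives_not (x : Fin n → Bool) (M : ℕ) : Survives k M (fun i => !x i) ↔ Survives k M x := by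
  simp only [Survives, walkPos_not, abs_neg]

lemma abs_walkPos_le_of_survives {x : Fin n → Bool} (hN : N ≤ n)
    (hx : Survives k N x) : |walkPos x N| ≤ k := by
  cases N with
  | zero => simp
  | succ M =>
    have hM := abs_lt.mp (hx M M.lt_succ_self)
    rw [walkPos_succ x (by omega), abs_le]
    split <;> omega

lemma survivalProb_zero : survivalProb p k 0 = 1 := by
  rw [survivalProb, walkProb_congr (C := Survives k 0) (D := fun _ => True) fun x =>
    iff_true_intro fun m hm => absurd hm m.not_lt_zero, walkProb_true]

lemma survivalProb_succ :
    survivalProb p k (N + 1) = walkProb p (Survives k (N + 1) : (Fin N → Bool) → Prop) := by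
  rw [← mul_one (walkProb p _), ← walkProb_true (n := 1), ← walkProb_append, survivalProb]
  exact walkProb_congr fun x => by
    rw [survives_init_iff x le_rfl, and_true]

lemma survives_succ_iff {x : Fin n → Bool} (hN : N ≤ n) :
    Survives k (N + 1) x ↔ (Survives k N x ∧ walkPos x N ≠ k) ∧ walkPos x N ≠ -k := by
  rw [Survives, Nat.forall_lt_succ_right, ← Survives]
  constructor
  · rintro ⟨hx, hN⟩
    have := abs_lt.mp hN
    exact ⟨⟨hx, by omega⟩, by omega⟩
  · rintro ⟨⟨hx, hk⟩, hk'⟩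
    have := abs_le.mp (abs_walkPos_le_of_survives hN hx)
    exact ⟨hx, abs_lt.mpr ⟨by omega, by omega⟩⟩

lemma survivalProb_eq_exitAt_add (hk : 0 < k) (N : ℕ) :
    survivalProb p k N = exitAt p k N k + exitAt p k N (-k) + survivalProb p k (N + 1) := by
  rw [survivalProb_succ, survivalProb, ← walkProb_and_add_and_not _ (walkPos · N = k),
    ← walkProb_and_add_and_not (fun x => Survives k N x ∧ walkPos x N ≠ k) (walkPos · N = -k),
    add_assoc, exitAt_eq_walkProb, exitAt_eq_walkProb]
  congr 1
  · exact walkProb_congr fun x => and_comm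
  congr 1
  · refine walkProb_congr fun x => ⟨fun h => ⟨h.2, h.1.1⟩, fun h => ⟨⟨h.2, ?_⟩, h.1⟩⟩
    rw [h.1]
    omega
  · exact walkProb_congr fun x => (survives_succ_iff le_rfl).symm

end Survival

section Exit

variable {p : ℝ} {k : ℕ}

lemma exitAt_nonneg (hp0 : 0 ≤ p) (hp1 : p ≤ 1) (n : ℕ) (e : ℤ) : 0 ≤ exitAt p k n e := by
  rw [exitAt_eq_walkProb]
  exact walkProb_nonneg hp0 hp1 _

lemma sum_range_exitAt (hk : 0 < k) (N : ℕ) :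
    ∑ n ∈ range N, (exitAt p k n k + exitAt p k n (-k)) = 1 - survivalProb p k N := by
  induction N with
  | zero => simp [survivalProb_zero]
  | succ N ih =>
    rw [sum_range_succ, ih, survivalProb_eq_exitAt_add hk N]
    ring

lemma survivalProb_antitone (hp0 : 0 ≤ p) (hp1 : p ≤ 1) (hk : 0 < k) :
    Antitone (survivalProb p k) :=
  antitone_nat_of_succ_le fun N => by
    have := survivalProb_eq_exitAt_add (p := p) hk N
    linarith [exitAt_nonneg (k := k) hp0 hp1 N k, exitAt_nonneg (k := k) hp0 hp1 N (-k)]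

lemma not_forall_up_of_survives (hk : 0 < k) {N : ℕ} (x : Fin (N + 2 * k) → Bool)
    (hx : Survives k (N + 2 * k) x) : ¬∀ j, x (Fin.natAdd N j) = true := by
  intro hup
  have hsuffix : (fun j => x (Fin.natAdd N j)) = fun _ => true := funext hup
  have hN := abs_lt.mp (hx N (by omega))
  have hlast := abs_lt.mp (hx (N + (2 * k - 1)) (by omega))
  rw [walkPos_init x le_rfl] at hN
  rw [walkPos_split, hsuffix, walkPos_of_le _ (by omega), Nat.add_sub_cancel_left,
    walkPos_const_true (by omega)] at hlast
  omega

lemma survivalProb_add_le (hp0 : 0 ≤ p) (hp1 : p ≤ 1) (hk : 0 < k) (N : ℕ) :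
    survivalProb p k (N + 2 * k) ≤ survivalProb p k N * (1 - p ^ (2 * k)) := calc
  survivalProb p k (N + 2 * k)
    ≤ walkProb p (fun x : Fin (N + 2 * k) → Bool =>
        Survives k N (fun i => x (Fin.castAdd (2 * k) i)) ∧
          ¬∀ j, x (Fin.natAdd N j) = true) :=
      walkProb_mono hp0 hp1 fun x hx =>
        ⟨(survives_init_iff x (by omega)).mpr fun m hm => hx m (by omega),
          not_forall_up_of_survives hk x hx⟩
  _ = survivalProb p k N * (1 - p ^ (2 * k)) := by
      rw [walkProb_append (Survives k N) fun z => ¬∀ j, z j = true, walkProb_not,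
        walkProb_all_true, survivalProb]

lemma survivalProb_le_pow (hp0 : 0 ≤ p) (hp1 : p ≤ 1) (hk : 0 < k) (j : ℕ) :
    survivalProb p k (j * (2 * k)) ≤ (1 - p ^ (2 * k)) ^ j := by
  induction j with
  | zero => simp [survivalProb_zero]
  | succ j ih =>
    have hq : 0 ≤ 1 - p ^ (2 * k) := sub_nonneg.mpr (pow_le_one₀ hp0 hp1)
    calc survivalProb p k ((j + 1) * (2 * k))
        ≤ survivalProb p k (j * (2 * k)) * (1 - p ^ (2 * k)) := by
          rw [add_one_mul]
          exact survivalProb_add_le hp0 hp1 hk _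
      _ ≤ (1 - p ^ (2 * k)) ^ (j + 1) := by
          rw [pow_succ]
          exact mul_le_mul_of_nonneg_right ih hq

lemma tendsto_survivalProb (hp0 : 0 < p) (hp1 : p ≤ 1) (hk : 0 < k) :
    Tendsto (survivalProb p k) atTop (𝓝 0) := by
  have hq : 1 - p ^ (2 * k) < 1 := sub_lt_self 1 (pow_pos hp0 _)
  have hq0 : 0 ≤ 1 - p ^ (2 * k) := sub_nonneg.mpr (pow_le_one₀ hp0.le hp1)
  have hbound : Tendsto (fun N => (1 - p ^ (2 * k)) ^ (N / (2 * k))) atTop (𝓝 0) :=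
    (tendsto_pow_atTop_nhds_zero_of_lt_one hq0 hq).comp (Nat.tendsto_div_const_atTop (by omega))
  refine tendsto_of_tendsto_of_tendsto_of_le_of_le tendsto_const_nhds hbound
    (fun N => walkProb_nonneg hp0.le hp1 _) fun N => ?_
  calc survivalProb p k N ≤ survivalProb p k (N / (2 * k) * (2 * k)) :=
        survivalProb_antitone hp0.le hp1 hk (Nat.div_mul_le_self N _)
    _ ≤ _ := survivalProb_le_pow hp0.le hp1 hk _

lemma hasSum_exitAt_add_exitAt_neg (hp0 : 0 < p) (hp1 : p ≤ 1) (hk : 0 < k) :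
    HasSum (fun n => exitAt p k n k + exitAt p k n (-k)) 1 := by
  refine (hasSum_iff_tendsto_nat_of_nonneg (fun n => add_nonneg (exitAt_nonneg hp0.le hp1 n _)
    (exitAt_nonneg hp0.le hp1 n _)) 1).mpr ?_
  simp_rw [sum_range_exitAt hk]
  simpa using (tendsto_survivalProb hp0 hp1 hk).const_sub 1

end Exit

lemma exitAt_neg {p : ℝ} (hp0 : p ≠ 0) (hp1 : 1 - p ≠ 0) (k n : ℕ) (e : ℤ) :
    exitAt p k n (-e) = ((1 - p) / p) ^ e * exitAt p k n e := by
  let flip : (Fin n → Bool) ≃ (Fin n → Bool) := Equiv.piCongrRight fun _ => Equiv.boolNot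
  rw [exitAt_eq_walkProb, exitAt_eq_walkProb, walkProb, walkProb, mul_sum,
    ← flip.sum_comp]
  refine sum_congr rfl fun x _ => ?_
  have hflip : flip x = fun i => !x i := rfl
  simp only [hflip, walkPos_not, neg_inj, survives_not, walkWt_not hp0 hp1]
  by_cases h : walkPos x n = e ∧ Survives k n x
  · rw [if_pos h, if_pos h, h.1, mul_comm]
  · rw [if_neg h, if_neg h, mul_zero]

lemma hasSum_exitAt_upper {p : ℝ} (hp0 : 0 < p) (hp1 : p < 1) {k : ℕ} (hk : 0 < k) :
    HasSum (fun n => exitAt p k n k) (1 + ((1 - p) / p) ^ k)⁻¹ := by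
  have hρ : 0 < 1 + ((1 - p) / p) ^ k := by
    have := div_pos (sub_pos.mpr hp1) hp0
    positivity
  have h := hasSum_exitAt_add_exitAt_neg hp0 hp1.le hk
  simp_rw [exitAt_neg hp0.ne' (sub_pos.mpr hp1).ne', zpow_natCast, ← one_add_mul] at h
  simpa [hρ.ne'] using h.mul_left (1 + ((1 - p) / p) ^ k)⁻¹

/-- The duration `T^{|k|}` is independent of whether the walk first hits `+k` or
`-k`:  `P(T^{|k|} = n, S_{T^{|k|}} = k) = P(T^{|k|} = n) · P(S_{T^{|k|}} = k)`. -/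
theorem duration_indep_winner (p : ℝ) (hp : 0 < p) (hp1 : p < 1) (k : ℕ) (hk : 0 < k) :
    ∀ n : ℕ,
      exitAt p k n (k : ℤ) =
        (exitAt p k n (k : ℤ) + exitAt p k n (-(k : ℤ))) * ∑' m : ℕ, exitAt p k m (k : ℤ) := by
  intro n
  have hρ : 1 + ((1 - p) / p) ^ k ≠ 0 := by
    have := div_pos (sub_pos.mpr hp1) hp
    positivity
  rw [(hasSum_exitAt_upper hp hp1 hk).tsum_eq, exitAt_neg hp.ne' (sub_pos.mpr hp1).ne',
    zpow_natCast, ← one_add_mul, mul_right_comm, mul_inv_cancel₀ hρ, one_mul]
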